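/- Let k ≥ 1. For every box (i,j) of the double staircase partition ρ̃_{2k} with i odd, j odd, and i ≥ 3, one has wt((i,j),(2,2k)) = 0. -/

import Mathlib

/-- `(i,j)` is a box of the Young diagram of `lam` (parts `lam 1, lam 2, …`, rows indexed
from the top, columns from the left): `1 ≤ i`, `1 ≤ j ≤ lam i`. -/
def inDiagram (lam : ℕ → ℕ) (p : ℕ × ℕ) : Prop :=
  1 ≤ p.1 ∧ 1 ≤ p.2 ∧ p.2 ≤ lam p.1

/-- A step of a lattice path: up `(i,j) → (i-1,j)` or right `(i,j) → (i,j+1)`. -/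
def isStep (p q : ℕ × ℕ) : Prop :=
  (p.1 = q.1 + 1 ∧ p.2 = q.2) ∨ (q.1 = p.1 ∧ q.2 = p.2 + 1)

/-- `P` is a lattice path in `lam` from box `a` to box `b`: a nonempty sequence of boxes of
`lam` starting at `a`, ending at `b`, each step going up or right. -/
def IsLatticePath (lam : ℕ → ℕ) (a b : ℕ × ℕ) (P : List (ℕ × ℕ)) : Prop :=
  P ≠ [] ∧ P.head? = some a ∧ P.getLast? = some b ∧
    (∀ q ∈ P, inDiagram lam q) ∧ List.Chain' isStep P

/-- The signed weight of a path: the product of `(-1)^{i-1}` over all right steps taken from a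
box in row `i` (up steps contribute `1`). -/
def pathWeight : List (ℕ × ℕ) → ℤ
  | [] => 1
  | [_] => 1
  | p :: q :: rest =>
      (if q.1 = p.1 then (-1 : ℤ) ^ (p.1 - 1) else 1) * pathWeight (q :: rest)

/-- `wt(a,b)`: the sum of the signed weights of all lattice paths in `lam` from `a` to `b`. -/
noncomputable def wtSum (lam : ℕ → ℕ) (a b : ℕ × ℕ) : ℤ :=
  ∑ᶠ P ∈ {P : List (ℕ × ℕ) | IsLatticePath lam a b P}, pathWeight P

/-- The double staircase partition `ρ̃_n`: `(n,n,n-2,n-2,…,2,2)` for even `n` and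
`(n,n,n-2,n-2,…,3,3,2)` for odd `n`, as a function sending a row index to its part. -/
def rhoTilde (n i : ℕ) : ℕ :=
  if 1 ≤ i ∧ i ≤ n then (if n % 2 = 1 ∧ i = n then 2 else n - 2 * ((i - 1) / 2)) else 0


/-!
Splitting paths by their first step gives `wt(i,j) = wt(i-1,j) + (-1)^(i-1) wt(i,j+1)`.
Applying this at `(i,j)`, `(i,j+1)` and `(i-1,j)` for odd `i`, the two contributions of the box
`(i-1,j+1)` carry opposite signs and cancel, leaving `wt(i,j) = wt(i-2,j) + wt(i,j+2)`.
All rows of `ρ̃_{2k}` have even length, so for odd `j` the boxes `(i,j+1)` and `(i-1,j)` lie in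
the diagram together with `(i,j)`, and since `(2,2k)` has even coordinates none of them is the
endpoint. Induction on `i` and, within a row, downwards on `j` ends at boxes outside the diagram
or in row `1`, above the endpoint, where `wt` vanishes.
-/

def latticePaths (lam : ℕ → ℕ) (a b : ℕ × ℕ) : Set (List (ℕ × ℕ)) :=
  {P | IsLatticePath lam a b P}

lemma wtSum_eq_finsum_latticePaths (lam : ℕ → ℕ) (a b : ℕ × ℕ) :
    wtSum lam a b = ∑ᶠ P ∈ latticePaths lam a b, pathWeight P := rfl

section LatticePaths

variable {lam : ℕ → ℕ} {a b : ℕ × ℕ}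

lemma isLatticePath_iff {P : List (ℕ × ℕ)} :
    IsLatticePath lam a b P ↔ P ≠ [] ∧ P.head? = some a ∧ P.getLast? = some b ∧
      (∀ q ∈ P, inDiagram lam q) ∧ List.IsChain isStep P :=
  Iff.rfl

lemma IsLatticePath.le {P : List (ℕ × ℕ)} (h : IsLatticePath lam a b P) :
    b.1 ≤ a.1 ∧ a.2 ≤ b.2 := by
  obtain ⟨-, ha, hb, -, hc⟩ := isLatticePath_iff.1 h
  refine List.IsChain.backwards_induction (fun x => b.1 ≤ x.1 ∧ x.2 ≤ b.2) P hc ?_ ?_ a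
    (List.mem_of_mem_head? ha)
  · rintro x y (⟨h1, h2⟩ | ⟨h1, h2⟩) ⟨h3, h4⟩ <;> omega
  · intro hne'
    rw [List.getLast?_eq_some_getLast hne', Option.some.injEq] at hb
    simp [hb]

lemma isLatticePath_singleton {p : ℕ × ℕ} :
    IsLatticePath lam a b [p] ↔ p = a ∧ p = b ∧ inDiagram lam p := by
  simp [isLatticePath_iff, eq_comm]

lemma isLatticePath_cons_cons {p q : ℕ × ℕ} {r : List (ℕ × ℕ)} :
    IsLatticePath lam a b (p :: q :: r) ↔
      p = a ∧ inDiagram lam p ∧ isStep p q ∧ IsLatticePath lam q b (q :: r) := by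
  simp only [isLatticePath_iff, ne_eq, reduceCtorEq, not_false_eq_true, List.head?_cons,
    Option.some.injEq, List.getLast?_cons_cons, List.mem_cons, forall_eq_or_imp, true_and,
    List.isChain_cons_cons]
  tauto

lemma IsLatticePath.cons {p q : ℕ × ℕ} {Q : List (ℕ × ℕ)} (hQ : IsLatticePath lam q b Q)
    (hp : inDiagram lam p) (hpq : isStep p q) : IsLatticePath lam p b (p :: Q) := by
  match Q, hQ with
  | [], hQ => exact absurd rfl hQ.1
  | q' :: r, hQ =>
    obtain rfl := Option.some.inj hQ.2.1.symm
    exact isLatticePath_cons_cons.2 ⟨rfl, hp, hpq, hQ⟩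

lemma latticePaths_eq_empty_of_not_inDiagram (h : ¬ inDiagram lam a) :
    latticePaths lam a b = ∅ := by
  refine Set.eq_empty_of_forall_notMem fun P hP => ?_
  match P with
  | [] => exact hP.1 rfl
  | [p] => exact h (by obtain ⟨rfl, -, hp⟩ := isLatticePath_singleton.1 hP; exact hp)
  | p :: q :: r => exact h (by obtain ⟨rfl, hp, -⟩ := isLatticePath_cons_cons.1 hP; exact hp)

lemma latticePaths_eq_empty_of_not_le (h : ¬ (b.1 ≤ a.1 ∧ a.2 ≤ b.2)) :
    latticePaths lam a b = ∅ :=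
  Set.eq_empty_of_forall_notMem fun _ hP => h hP.le

lemma latticePaths_self (h : inDiagram lam a) : latticePaths lam a a = {[a]} := by
  ext P
  refine ⟨fun hP => ?_, fun hP => ?_⟩
  · match P with
    | [] => exact absurd rfl hP.1
    | [p] => obtain ⟨rfl, -⟩ := isLatticePath_singleton.1 hP; rfl
    | p :: q :: r =>
      obtain ⟨rfl, -, hstep, hq⟩ := isLatticePath_cons_cons.1 hP
      have := hq.le
      rcases hstep with ⟨h1, h2⟩ | ⟨h1, h2⟩ <;> omega
  · rw [Set.mem_singleton_iff.1 hP]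
    exact isLatticePath_singleton.2 ⟨rfl, rfl, h⟩

lemma latticePaths_eq_union {i j : ℕ} (h : inDiagram lam (i, j)) (hb : (i, j) ≠ b) :
    latticePaths lam (i, j) b =
      List.cons (i, j) '' latticePaths lam (i - 1, j) b ∪
        List.cons (i, j) '' latticePaths lam (i, j + 1) b := by
  ext P
  refine ⟨fun hP => ?_, ?_⟩
  · match P with
    | [] => exact absurd rfl hP.1
    | [p] => obtain ⟨rfl, rfl, -⟩ := isLatticePath_singleton.1 hP; exact absurd rfl hb
    | p :: q :: r =>
      obtain ⟨rfl, -, hstep, hq⟩ := isLatticePath_cons_cons.1 hP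
      obtain ⟨q1, q2⟩ := q
      rcases hstep with ⟨h1, h2⟩ | ⟨h1, h2⟩
      · obtain ⟨rfl, rfl⟩ : q1 = i - 1 ∧ q2 = j := by simp only at h1 h2; omega
        exact Or.inl ⟨_, hq, rfl⟩
      · obtain ⟨rfl, rfl⟩ : q1 = i ∧ q2 = j + 1 := by simp only at h1 h2; omega
        exact Or.inr ⟨_, hq, rfl⟩
  · have hi : 1 ≤ i := h.1
    rintro (⟨Q, hQ, rfl⟩ | ⟨Q, hQ, rfl⟩)
    · exact hQ.cons h (Or.inl ⟨by omega, rfl⟩)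
    · exact hQ.cons h (Or.inr ⟨rfl, rfl⟩)

theorem latticePaths_finite (lam : ℕ → ℕ) (a b : ℕ × ℕ) : (latticePaths lam a b).Finite := by
  by_cases hd : inDiagram lam a
  · by_cases hle : b.1 ≤ a.1 ∧ a.2 ≤ b.2
    · by_cases hab : a = b
      · rw [hab, latticePaths_self (hab ▸ hd)]
        exact Set.finite_singleton _
      · have := hd.1
        rw [latticePaths_eq_union hd hab]
        exact ((latticePaths_finite lam _ b).image _).union
          ((latticePaths_finite lam _ b).image _)
    · rw [latticePaths_eq_empty_of_not_le hle]
      exact Set.finite_empty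
  · rw [latticePaths_eq_empty_of_not_inDiagram hd]
    exact Set.finite_empty
termination_by a.1 + (b.2 + 1 - a.2)

end LatticePaths

section Weights

variable {lam : ℕ → ℕ} {a b : ℕ × ℕ}

lemma wtSum_eq_zero_of_not_inDiagram (h : ¬ inDiagram lam a) : wtSum lam a b = 0 := by
  rw [wtSum_eq_finsum_latticePaths, latticePaths_eq_empty_of_not_inDiagram h, finsum_mem_empty]

lemma wtSum_eq_zero_of_fst_lt (h : a.1 < b.1) : wtSum lam a b = 0 := by
  rw [wtSum_eq_finsum_latticePaths, latticePaths_eq_empty_of_not_le (by omega), finsum_mem_empty]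

lemma pathWeight_cons_up {i j : ℕ} {Q : List (ℕ × ℕ)} (hi : 1 ≤ i)
    (hQ : Q ∈ latticePaths lam (i - 1, j) b) : pathWeight ((i, j) :: Q) = pathWeight Q := by
  match Q, hQ with
  | [], hQ => exact absurd rfl hQ.1
  | q :: r, hQ =>
    obtain rfl := Option.some.inj hQ.2.1.symm
    simp only [pathWeight, if_neg (show i - 1 ≠ i by omega), one_mul]

lemma pathWeight_cons_right {i j : ℕ} {Q : List (ℕ × ℕ)}
    (hQ : Q ∈ latticePaths lam (i, j + 1) b) :
    pathWeight ((i, j) :: Q) = (-1) ^ (i - 1) * pathWeight Q := by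
  match Q, hQ with
  | [], hQ => exact absurd rfl hQ.1
  | q :: r, hQ =>
    obtain rfl := Option.some.inj hQ.2.1.symm
    simp only [pathWeight, if_true]

lemma wtSum_eq_add {i j : ℕ} (h : inDiagram lam (i, j)) (hb : (i, j) ≠ b) :
    wtSum lam (i, j) b = wtSum lam (i - 1, j) b + (-1) ^ (i - 1) * wtSum lam (i, j + 1) b := by
  have hcons : Function.Injective (List.cons (i, j)) := List.cons_injective
  have hdisj : Disjoint (List.cons (i, j) '' latticePaths lam (i - 1, j) b)
      (List.cons (i, j) '' latticePaths lam (i, j + 1) b) := by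
    refine Set.disjoint_image_of_injective hcons (Set.disjoint_left.2 fun P hup hright => ?_)
    have := Option.some.inj (hup.2.1.symm.trans hright.2.1)
    simp only [Prod.mk.injEq] at this
    omega
  rw [wtSum_eq_finsum_latticePaths, latticePaths_eq_union h hb,
    finsum_mem_union hdisj ((latticePaths_finite ..).image _) ((latticePaths_finite ..).image _),
    finsum_mem_image hcons.injOn, finsum_mem_image hcons.injOn,
    finsum_mem_congr rfl fun Q hQ => pathWeight_cons_up h.1 hQ,
    finsum_mem_congr rfl fun Q hQ => pathWeight_cons_right hQ, ← mul_finsum_mem]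
  rfl

lemma wtSum_eq_add_of_odd {i j : ℕ} (hi : Odd i) (hright : inDiagram lam (i, j + 1))
    (hup : inDiagram lam (i - 1, j)) (hb : (i, j) ≠ b) (hb_right : (i, j + 1) ≠ b)
    (hb_up : (i - 1, j) ≠ b) :
    wtSum lam (i, j) b = wtSum lam (i - 2, j) b + wtSum lam (i, j + 2) b := by
  have hi₁ : 1 ≤ i - 1 := hup.1
  have h₀ : inDiagram lam (i, j) := ⟨by omega, hup.2.1, (Nat.le_succ j).trans hright.2.2⟩
  have hsign₀ : (-1 : ℤ) ^ (i - 1) = 1 := (Nat.Odd.sub_odd hi odd_one).neg_one_pow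
  have hsign₁ : (-1 : ℤ) ^ (i - 2) = -1 := (Nat.Odd.sub_even (by omega) hi even_two).neg_one_pow
  have e₀ := wtSum_eq_add h₀ hb
  have e₁ : wtSum lam (i, j + 1) b =
      wtSum lam (i - 1, j + 1) b + (-1) ^ (i - 1) * wtSum lam (i, j + 2) b :=
    wtSum_eq_add hright hb_right
  have e₂ : wtSum lam (i - 1, j) b =
      wtSum lam (i - 2, j) b + (-1) ^ (i - 2) * wtSum lam (i - 1, j + 1) b :=
    wtSum_eq_add hup hb_up
  rw [hsign₀] at e₀ e₁
  rw [hsign₁] at e₂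
  linear_combination e₀ + e₁ + e₂

end Weights

theorem wtSum_eq_zero_of_odd_of_odd {lam : ℕ → ℕ} (hlam : AntitoneOn lam (Set.Ici 1))
    (hlam_even : ∀ i, Odd i → Even (lam i)) {b₁ b₂ : ℕ} (hb₁ : Even b₁) (hb₁_pos : 0 < b₁)
    (hb₂ : Even b₂) (i j : ℕ) (hi : Odd i) (hj : Odd j) : wtSum lam (i, j) (b₁, b₂) = 0 := by
  by_cases hin : inDiagram lam (i, j)
  swap
  · exact wtSum_eq_zero_of_not_inDiagram hin
  rcases lt_or_ge i b₁ with hlt | hge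
  · exact wtSum_eq_zero_of_fst_lt hlt
  have hj₁ : 1 ≤ j := hin.2.1
  have hj_le : j ≤ lam i := hin.2.2
  have hi' := Nat.odd_iff.1 hi
  have hj' := Nat.odd_iff.1 hj
  have hb₁' := Nat.even_iff.1 hb₁
  have hb₂' := Nat.even_iff.1 hb₂
  have hlam_i := Nat.even_iff.1 (hlam_even i hi)
  have hlam_up : lam i ≤ lam (i - 1) :=
    hlam (show 1 ≤ i - 1 by omega) (show 1 ≤ i by omega) (Nat.sub_le i 1)
  have hright : inDiagram lam (i, j + 1) := ⟨by omega, by omega, show j + 1 ≤ lam i by omega⟩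
  have hup : inDiagram lam (i - 1, j) := ⟨by omega, hj₁, hj_le.trans hlam_up⟩
  rw [wtSum_eq_add_of_odd hi hright hup (by simp only [ne_eq, Prod.mk.injEq]; omega)
    (by simp only [ne_eq, Prod.mk.injEq]; omega) (by simp only [ne_eq, Prod.mk.injEq]; omega),
    wtSum_eq_zero_of_odd_of_odd hlam hlam_even hb₁ hb₁_pos hb₂ (i - 2) j
      (Nat.Odd.sub_even (by omega) hi even_two) hj,
    wtSum_eq_zero_of_odd_of_odd hlam hlam_even hb₁ hb₁_pos hb₂ i (j + 2) hi (hj.add_even even_two),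
    add_zero]
termination_by (i, lam i + 1 - j)
decreasing_by
  · exact Prod.Lex.left _ _ (by omega)
  · exact Prod.Lex.right _ (by omega)

lemma rhoTilde_antitoneOn (n : ℕ) : AntitoneOn (rhoTilde n) (Set.Ici 1) := by
  intro a ha b hb hab
  simp only [Set.mem_Ici] at ha hb
  unfold rhoTilde
  split_ifs <;> omega

lemma even_rhoTilde_two_mul (k i : ℕ) : Even (rhoTilde (2 * k) i) := by
  rw [Nat.even_iff]
  unfold rhoTilde
  split_ifs <;> omega

theorem stmt11_general (k : ℕ) (i j : ℕ)
    (hi : i % 2 = 1) (hj : j % 2 = 1) :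
    wtSum (rhoTilde (2 * k)) (i, j) (2, 2 * k) = 0 :=
  wtSum_eq_zero_of_odd_of_odd (rhoTilde_antitoneOn _) (fun i _ => even_rhoTilde_two_mul k i)
    even_two two_pos (even_two_mul k) i j (Nat.odd_iff.2 hi) (Nat.odd_iff.2 hj)

/-- For `k ≥ 1` and every box `(i,j)` of the double staircase partition
`ρ̃_{2k}` with `i` odd, `j` odd and `i ≥ 3`, `wt((i,j),(2,2k)) = 0`. -/
theorem stmt11 (k : ℕ) (hk : 1 ≤ k) (i j : ℕ)
    (hbox : inDiagram (rhoTilde (2 * k)) (i, j)) (hi : i % 2 = 1) (hj : j % 2 = 1)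
    (hi3 : 3 ≤ i) :
    wtSum (rhoTilde (2 * k)) (i, j) (2, 2 * k) = 0 :=
  stmt11_general k i j hi hj
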